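/- arXiv:2302.13411 — 8 statements merged into one kernel-verified Lean document; each statement's English description precedes it below -/
import Mathlib

section
/- Let δ ≥ 0 be such that the deviation vector p^δ (for the weighted bottleneck Hamming distance setting) is feasible. Then for every δ' ≥ δ, the deviation vector p^{δ'} is also feasible. -/
open Finset

noncomputable section

variable {S : Type*}

/-- A deviation vector `p` is feasible: it respects the bounds `l ≤ p ≤ u`
(interpreted in the extended reals) and makes `Fstar` a minimum-cost member
of `𝓕` with respect to `c - p`. -/
def IsFeasibleDev (𝓕 : Finset (Finset S)) (Fstar : Finset S)
    (c : S → ℝ) (l u : S → EReal) (p : S → ℝ) : Prop :=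
  (∀ s, l s ≤ (p s : EReal) ∧ (p s : EReal) ≤ u s) ∧
  ∀ F ∈ 𝓕, ∑ s ∈ Fstar, (c s - p s) ≤ ∑ s ∈ F, (c s - p s)

/-- The weighted bottleneck Hamming distance `H_{∞,w}(p) = max {w(s) : p(s) ≠ 0}`,
with the maximum over the empty set taken to be `0`. -/
def Hbot [Fintype S] (w p : S → ℝ) : ℝ :=
  ((((univ : Finset S).filter fun s => p s ≠ 0)).image w).max.unbotD 0

/-- The constant `m` from the bottleneck Hamming distance setting. -/
def mB [DecidableEq S] (𝓕 : Finset (Finset S)) (Fstar : Finset S)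
    (c : S → ℝ) (l u : S → EReal) : ℝ :=
  max 0 ((𝓕.image fun F =>
    (∑ s ∈ Fstar, c s) - (∑ s ∈ F, c s)
      - ∑ s ∈ (Fstar \ F).filter (fun s => u s < 0), (u s).toReal
      + ∑ s ∈ (F \ Fstar).filter (fun s => 0 < l s), (l s).toReal).max.unbotD 0)

/-- The special deviation vector `p^δ` of the bottleneck Hamming distance setting. -/
def pB [DecidableEq S] (𝓕 : Finset (Finset S)) (Fstar : Finset S)
    (c : S → ℝ) (l u : S → EReal) (w : S → ℝ) (δ : ℝ) (s : S) : ℝ :=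
  if w s ≤ δ then
    if s ∈ Fstar then (if u s = ⊤ then mB 𝓕 Fstar c l u else (u s).toReal)
    else (if l s = ⊥ then -(mB 𝓕 Fstar c l u) else (l s).toReal)
  else 0

/-! Raising `δ` to `δ'` only changes `p^δ` at elements with `δ < w s`, where `p^δ` vanishes, so
feasibility of `p^δ` forces `l s ≤ 0 ≤ u s` there. At such elements the new value `p^{δ'}(s)` still
lies in `[l s, u s]`, and it can only increase `p` on `F*` and only decrease it off `F*`. Such a
change lowers the `(c - p)`-cost of `F*` by at least as much as that of any other `F`, so `F*`
stays optimal. -/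

theorem Finset.sum_le_sum_of_nonneg_on_of_nonpos_off {ι M : Type*} [DecidableEq ι]
    [AddCommMonoid M] [PartialOrder M] [IsOrderedAddMonoid M] {f : ι → M} {A B : Finset ι}
    (hA : ∀ i ∈ A, 0 ≤ f i) (hB : ∀ i ∈ B, i ∉ A → f i ≤ 0) :
    ∑ i ∈ B, f i ≤ ∑ i ∈ A, f i :=
  calc ∑ i ∈ B, f i = ∑ i ∈ B ∩ A, f i + ∑ i ∈ B \ A, f i := (sum_inter_add_sum_sdiff B A f).symm
    _ ≤ ∑ i ∈ B ∩ A, f i + 0 := by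
        gcongr
        exact sum_nonpos fun i hi => hB i (mem_sdiff.1 hi).1 (mem_sdiff.1 hi).2
    _ ≤ ∑ i ∈ A, f i := by
        rw [add_zero]
        exact sum_le_sum_of_subset_of_nonneg inter_subset_right fun i hi _ => hA i hi

theorem IsFeasibleDev.of_le_on_of_ge_off {𝓕 : Finset (Finset S)} {Fstar : Finset S}
    {c : S → ℝ} {l u : S → EReal} {p p' : S → ℝ} [DecidableEq S]
    (hp : IsFeasibleDev 𝓕 Fstar c l u p)
    (hbounds : ∀ s, l s ≤ (p' s : EReal) ∧ (p' s : EReal) ≤ u s)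
    (hin : ∀ s ∈ Fstar, p s ≤ p' s) (hout : ∀ s ∉ Fstar, p' s ≤ p s) :
    IsFeasibleDev 𝓕 Fstar c l u p' := by
  refine ⟨hbounds, fun F hF => ?_⟩
  have hgain : ∑ s ∈ F, (p' s - p s) ≤ ∑ s ∈ Fstar, (p' s - p s) :=
    sum_le_sum_of_nonneg_on_of_nonpos_off (fun s hs => sub_nonneg.2 (hin s hs))
      (fun s _ hs => sub_nonpos.2 (hout s hs))
  have hopt := hp.2 F hF
  simp only [sum_sub_distrib] at hgain hopt ⊢
  linarith

section pB

variable [DecidableEq S] {𝓕 : Finset (Finset S)} {Fstar : Finset S} {c w : S → ℝ}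
  {l u : S → EReal} {δ δ' : ℝ} {s : S}

theorem mB_nonneg : 0 ≤ mB 𝓕 Fstar c l u := le_max_left _ _

theorem pB_eq_zero_of_not_le (h : ¬ w s ≤ δ) : pB 𝓕 Fstar c l u w δ s = 0 := by
  simp [pB, h]

theorem pB_eq_of_le_of_le (h : w s ≤ δ) (hδ : δ ≤ δ') :
    pB 𝓕 Fstar c l u w δ' s = pB 𝓕 Fstar c l u w δ s := by
  simp [pB, h, h.trans hδ]

theorem pB_nonneg_of_mem (hs : s ∈ Fstar) (hu0 : 0 ≤ u s) : 0 ≤ pB 𝓕 Fstar c l u w δ s := by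
  unfold pB
  split_ifs
  exacts [mB_nonneg, EReal.toReal_nonneg hu0, le_rfl]

theorem pB_nonpos_of_notMem (hs : s ∉ Fstar) (hl0 : l s ≤ 0) : pB 𝓕 Fstar c l u w δ s ≤ 0 := by
  unfold pB
  split_ifs
  exacts [neg_nonpos.2 mB_nonneg, EReal.toReal_nonpos hl0, le_rfl]

theorem pB_mem_bounds (hl : l s ≠ ⊤) (hu : u s ≠ ⊥) (hlu : l s ≤ u s) (hl0 : l s ≤ 0)
    (hu0 : 0 ≤ u s) :
    l s ≤ (pB 𝓕 Fstar c l u w δ s : EReal) ∧ (pB 𝓕 Fstar c l u w δ s : EReal) ≤ u s := by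
  unfold pB
  split_ifs with _ _ hut hlb
  · exact ⟨hl0.trans (EReal.coe_nonneg.2 mB_nonneg), hut ▸ le_top⟩
  · rw [EReal.coe_toReal hut hu]
    exact ⟨hlu, le_rfl⟩
  · exact ⟨hlb ▸ bot_le, (EReal.coe_nonpos.2 (neg_nonpos.2 mB_nonneg)).trans hu0⟩
  · rw [EReal.coe_toReal hl hlb]
    exact ⟨le_rfl, hlu⟩
  · exact ⟨EReal.coe_zero ▸ hl0, EReal.coe_zero ▸ hu0⟩

theorem pB_eq_or_bounds_straddle_zero (hδ : δ ≤ δ')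
    (hbounds : l s ≤ (pB 𝓕 Fstar c l u w δ s : EReal) ∧ (pB 𝓕 Fstar c l u w δ s : EReal) ≤ u s) :
    pB 𝓕 Fstar c l u w δ' s = pB 𝓕 Fstar c l u w δ s ∨
      (pB 𝓕 Fstar c l u w δ s = 0 ∧ l s ≤ 0 ∧ 0 ≤ u s) := by
  by_cases h : w s ≤ δ
  · exact .inl (pB_eq_of_le_of_le h hδ)
  · rw [pB_eq_zero_of_not_le h, EReal.coe_zero] at hbounds
    exact .inr ⟨pB_eq_zero_of_not_le h, hbounds⟩

end pB

theorem bottleneck_monotone_feasible_general [DecidableEq S]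
    (𝓕 : Finset (Finset S)) (Fstar : Finset S) (c w : S → ℝ) (l u : S → EReal)
    (hl : ∀ s, l s ≠ ⊤) (hu : ∀ s, u s ≠ ⊥)
    (hlu : ∀ s, l s ≤ u s)
    (δ : ℝ)
    (hfeas : IsFeasibleDev 𝓕 Fstar c l u (pB 𝓕 Fstar c l u w δ)) :
    ∀ δ' : ℝ, δ ≤ δ' → IsFeasibleDev 𝓕 Fstar c l u (pB 𝓕 Fstar c l u w δ') := by
  intro δ' hδ'
  have hcases s := pB_eq_or_bounds_straddle_zero (w := w) hδ' (hfeas.1 s)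
  refine hfeas.of_le_on_of_ge_off (fun s => ?_) (fun s hs => ?_) (fun s hs => ?_)
  · rcases hcases s with heq | ⟨-, hl0, hu0⟩
    · exact heq ▸ hfeas.1 s
    · exact pB_mem_bounds (hl s) (hu s) (hlu s) hl0 hu0
  · rcases hcases s with heq | ⟨hzero, -, hu0⟩
    · exact heq.ge
    · exact hzero ▸ pB_nonneg_of_mem hs hu0
  · rcases hcases s with heq | ⟨hzero, hl0, -⟩
    · exact heq.le
    · exact hzero ▸ pB_nonpos_of_notMem hs hl0

theorem bottleneck_monotone_feasible [Fintype S] [DecidableEq S]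
    (𝓕 : Finset (Finset S)) (Fstar : Finset S) (c w : S → ℝ) (l u : S → EReal)
    (hw : ∀ s, 0 < w s) (hl : ∀ s, l s ≠ ⊤) (hu : ∀ s, u s ≠ ⊥)
    (hlu : ∀ s, l s ≤ u s) (h𝓕 : 𝓕.Nonempty) (hF : Fstar ∈ 𝓕)
    (δ : ℝ) (hδ : 0 ≤ δ)
    (hfeas : IsFeasibleDev 𝓕 Fstar c l u (pB 𝓕 Fstar c l u w δ)) :
    ∀ δ' : ℝ, δ ≤ δ' → IsFeasibleDev 𝓕 Fstar c l u (pB 𝓕 Fstar c l u w δ') :=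
  bottleneck_monotone_feasible_general 𝓕 Fstar c w l u hl hu hlu δ hfeas
end
end

section
/- Let (S, 𝓕, F*, c, ℓ, u) be a feasible instance of the constrained minimum-cost inverse optimization problem under the weighted ℓ∞-norm objective, and let p be an optimal deviation vector. Set δ := ‖p‖_{∞,w} = max{w(s)·|p(s)| : s ∈ S}. Then the deviation vector p^δ is also feasible and optimal, i.e., ℓ ≤ p^δ ≤ u, (c−p^δ)(F*) ≤ (c−p^δ)(F) for every F ∈ 𝓕, and ‖p^δ‖_{∞,w} ≤ ‖q‖_{∞,w} for every feasible deviation vector q. -/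
open Finset

noncomputable section

variable {S : Type*}

/-- The weighted ℓ∞-norm `‖p‖_{∞,w} = max_{s ∈ S} w(s)·|p(s)|`. -/
def normI [Fintype S] [Nonempty S] (w p : S → ℝ) : ℝ :=
  (univ : Finset S).sup' univ_nonempty fun s => w s * |p s|

/-- The special deviation vector `p^δ` of the weighted ℓ∞-norm setting:
`δ/w(s)` clamped to `[ℓ(s), u(s)]` on `F*`, and `-δ/w(s)` clamped to
`[ℓ(s), u(s)]` outside of `F*`. -/
def pI [DecidableEq S] (Fstar : Finset S) (l u : S → EReal) (w : S → ℝ) (δ : ℝ) (s : S) : ℝ :=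
  if s ∈ Fstar then
    if ((δ / w s : ℝ) : EReal) < l s then (l s).toReal
    else if u s < ((δ / w s : ℝ) : EReal) then (u s).toReal
    else δ / w s
  else
    if ((-(δ / w s) : ℝ) : EReal) < l s then (l s).toReal
    else if u s < ((-(δ / w s) : ℝ) : EReal) then (u s).toReal
    else -(δ / w s)

theorem linf_special_optimal [Fintype S] [DecidableEq S] [Nonempty S]
    (𝓕 : Finset (Finset S)) (Fstar : Finset S) (c w : S → ℝ) (l u : S → EReal)
    (hw : ∀ s, 0 < w s) (hl : ∀ s, l s ≠ ⊤) (hu : ∀ s, u s ≠ ⊥)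
    (hlu : ∀ s, l s ≤ u s) (h𝓕 : 𝓕.Nonempty) (hF : Fstar ∈ 𝓕)
    (p : S → ℝ) (hp : IsFeasibleDev 𝓕 Fstar c l u p)
    (hopt : ∀ q, IsFeasibleDev 𝓕 Fstar c l u q → normI w p ≤ normI w q) :
    IsFeasibleDev 𝓕 Fstar c l u (pI Fstar l u w (normI w p)) ∧
    ∀ q, IsFeasibleDev 𝓕 Fstar c l u q →
      normI w (pI Fstar l u w (normI w p)) ≤ normI w q := by
  obtain ⟨hplu, hpopt⟩ := hp
  set δ := normI w p with hδdef
  set r := pI Fstar l u w δ with hrdef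
  have hbd : ∀ s, w s * |p s| ≤ δ := fun s =>
    Finset.le_sup' (fun s => w s * |p s|) (mem_univ s)
  have hδ0 : 0 ≤ δ := by
    have s0 := Classical.arbitrary S
    have := hbd s0
    have h1 : 0 ≤ w s0 * |p s0| := mul_nonneg (hw s0).le (abs_nonneg _)
    linarith
  have hpb : ∀ s, -(δ / w s) ≤ p s ∧ p s ≤ δ / w s := by
    intro s
    have h1 : |p s| ≤ δ / w s := by
      rw [le_div_iff₀ (hw s)]
      linarith [hbd s]
    constructor
    · linarith [(abs_le.1 h1).1]
    · exact (abs_le.1 h1).2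
  have key : ∀ s, (l s ≤ (r s : EReal) ∧ (r s : EReal) ≤ u s)
      ∧ (-(δ / w s) ≤ r s ∧ r s ≤ δ / w s)
      ∧ (s ∈ Fstar → p s ≤ r s) ∧ (s ∉ Fstar → r s ≤ p s) := by
    intro s
    have hls := (hplu s).1
    have hus := (hplu s).2
    have hpbs := hpb s
    have hδw : 0 ≤ δ / w s := div_nonneg hδ0 (hw s).le
    rw [hrdef]
    unfold pI
    by_cases hs : s ∈ Fstar <;> simp only [hs, if_true, if_false]
    · split_ifs with h1 h2
      · -- δ/w s < l s : contradiction with l ≤ p ≤ δ/w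
        exfalso
        have : (p s : EReal) ≤ ((δ / w s : ℝ) : EReal) := EReal.coe_le_coe_iff.2 hpbs.2
        exact (lt_irrefl (l s) (lt_of_le_of_lt (hls.trans this) h1)).elim
      · -- u s < δ/w s
        have hut : u s ≠ ⊤ := (h2.trans_le le_top).ne
        have hco : ((u s).toReal : EReal) = u s := EReal.coe_toReal hut (hu s)
        have hpu : p s ≤ (u s).toReal := by
          rw [← EReal.coe_le_coe_iff, hco]; exact hus
        have hur : (u s).toReal < δ / w s := by
          rw [← EReal.coe_lt_coe_iff, hco]; exact h2
        refine ⟨⟨?_, ?_⟩, ⟨?_, hur.le⟩, fun _ => hpu, fun h => absurd trivial h⟩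
        · rw [hco]; exact (hlu s)
        · rw [hco]
        · linarith [hpbs.1]
      · push_neg at h1 h2
        refine ⟨⟨h1, h2⟩, ⟨by linarith, le_refl _⟩, fun _ => hpbs.2, fun h => absurd trivial h⟩
    · split_ifs with h1 h2
      · -- -(δ/w) < l s
        have hlb : l s ≠ ⊥ := by
          intro hb; rw [hb] at h1; exact absurd h1 (by simp)
        have hco : ((l s).toReal : EReal) = l s := EReal.coe_toReal (hl s) hlb
        have hlp : (l s).toReal ≤ p s := by
          rw [← EReal.coe_le_coe_iff, hco]; exact hls
        have hlr : -(δ / w s) < (l s).toReal := by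
          rw [← EReal.coe_lt_coe_iff, hco]; exact h1
        refine ⟨⟨?_, ?_⟩, ⟨hlr.le, ?_⟩, fun h => h.elim, fun _ => hlp⟩
        · rw [hco]
        · rw [hco]; exact hlu s
        · linarith [hpbs.2]
      · -- u s < -(δ/w) : contradiction
        exfalso
        have : ((-(δ / w s) : ℝ) : EReal) ≤ (p s : EReal) := EReal.coe_le_coe_iff.2 hpbs.1
        exact (lt_irrefl (u s) (lt_of_lt_of_le h2 (this.trans hus))).elim
      · push_neg at h1 h2
        refine ⟨⟨h1, h2⟩, ⟨le_refl _, by linarith⟩, fun h => h.elim, fun _ => hpbs.1⟩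
  have hrnorm : normI w (r) ≤ δ := by
    apply Finset.sup'_le
    intro s _
    have h1 : |r s| ≤ δ / w s := abs_le.2 ⟨(key s).2.1.1, (key s).2.1.2⟩
    calc w s * |r s| ≤ w s * (δ / w s) := by
          exact mul_le_mul_of_nonneg_left h1 (hw s).le
      _ = δ := by rw [← mul_div_assoc]; exact mul_div_cancel_left₀ δ (hw s).ne'
  refine ⟨⟨fun s => (key s).1, ?_⟩, fun q hq => hrnorm.trans (hopt q hq)⟩
  intro F hFmem
  have e1 : ∑ s ∈ Fstar, (c s - r s) =
      ∑ s ∈ Fstar ∩ F, (c s - r s) + ∑ s ∈ Fstar \ F, (c s - r s) :=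
    (Finset.sum_inter_add_sum_sdiff Fstar F _).symm
  have e2 : ∑ s ∈ F, (c s - r s) =
      ∑ s ∈ Fstar ∩ F, (c s - r s) + ∑ s ∈ F \ Fstar, (c s - r s) := by
    rw [Finset.inter_comm]
    exact (Finset.sum_inter_add_sum_sdiff F Fstar _).symm
  have f1 : ∑ s ∈ Fstar, (c s - p s) =
      ∑ s ∈ Fstar ∩ F, (c s - p s) + ∑ s ∈ Fstar \ F, (c s - p s) :=
    (Finset.sum_inter_add_sum_sdiff Fstar F _).symm
  have f2 : ∑ s ∈ F, (c s - p s) =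
      ∑ s ∈ Fstar ∩ F, (c s - p s) + ∑ s ∈ F \ Fstar, (c s - p s) := by
    rw [Finset.inter_comm]
    exact (Finset.sum_inter_add_sum_sdiff F Fstar _).symm
  have hmid : ∑ s ∈ Fstar \ F, (c s - p s) ≤ ∑ s ∈ F \ Fstar, (c s - p s) := by
    have := hpopt F hFmem
    rw [f1, f2] at this
    linarith
  have step1 : ∑ s ∈ Fstar \ F, (c s - r s) ≤ ∑ s ∈ Fstar \ F, (c s - p s) := by
    apply Finset.sum_le_sum
    intro s hsm
    have := (key s).2.2.1 (Finset.mem_sdiff.1 hsm).1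
    linarith
  have step2 : ∑ s ∈ F \ Fstar, (c s - p s) ≤ ∑ s ∈ F \ Fstar, (c s - r s) := by
    apply Finset.sum_le_sum
    intro s hsm
    have := (key s).2.2.2 (Finset.mem_sdiff.1 hsm).2
    linarith
  rw [e1, e2]
  linarith
end
end

section
/- Let δ ≥ 0 be such that the deviation vector p^δ (for the weighted ℓ∞-norm setting) is feasible. Then for every δ' ≥ δ, the deviation vector p^{δ'} is also feasible. -/
open Finset

noncomputable section

variable {S : Type*}

/-- Clamping a real number to an `EReal` interval. -/
def clampE (l u : EReal) (x : ℝ) : ℝ :=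
  if (x : EReal) < l then l.toReal else if u < (x : ℝ) then u.toReal else x

lemma clampE_mem (l u : EReal) (hl : l ≠ ⊤) (hu : u ≠ ⊥) (hlu : l ≤ u) (x : ℝ) :
    l ≤ (clampE l u x : EReal) ∧ (clampE l u x : EReal) ≤ u := by
  unfold clampE
  split_ifs with h1 h2
  · have hbot : l ≠ ⊥ := fun h => by simp [h] at h1
    rw [EReal.coe_toReal hl hbot]
    exact ⟨le_refl _, hlu⟩
  · have htop : u ≠ ⊤ := fun h => by simp [h] at h2
    rw [EReal.coe_toReal htop hu]
    exact ⟨hlu, le_refl _⟩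
  · exact ⟨not_lt.mp h1, not_lt.mp h2⟩

lemma clampE_mono (l u : EReal) (hl : l ≠ ⊤) (hu : u ≠ ⊥) (hlu : l ≤ u)
    {x y : ℝ} (hxy : x ≤ y) : clampE l u x ≤ clampE l u y := by
  have hxy' : (x : EReal) ≤ (y : EReal) := by exact_mod_cast hxy
  unfold clampE
  by_cases h1 : (x : EReal) < l
  · have hbot : l ≠ ⊥ := fun h => by simp [h] at h1
    rw [if_pos h1]
    by_cases h2 : (y : EReal) < l
    · rw [if_pos h2]
    · rw [if_neg h2]
      by_cases h3 : u < (y : ℝ)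
      · rw [if_pos h3]
        have htop : u ≠ ⊤ := fun h => by simp [h] at h3
        exact EReal.toReal_le_toReal hlu hbot htop
      · rw [if_neg h3]
        have hy : l ≤ (y : EReal) := not_lt.mp h2
        rw [← EReal.coe_toReal hl hbot] at hy
        exact_mod_cast hy
  · rw [if_neg h1]
    have hlx : l ≤ (x : EReal) := not_lt.mp h1
    have h2 : ¬ (y : EReal) < l := not_lt.mpr (hlx.trans hxy')
    rw [if_neg h2]
    by_cases h3 : u < (x : ℝ)
    · rw [if_pos h3, if_pos (lt_of_lt_of_le h3 hxy')]
    · rw [if_neg h3]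
      have hxu : (x : EReal) ≤ u := not_lt.mp h3
      by_cases h4 : u < (y : ℝ)
      · rw [if_pos h4]
        have htop : u ≠ ⊤ := fun h => by simp [h] at h4
        rw [← EReal.coe_toReal htop hu] at hxu
        exact_mod_cast hxu
      · rw [if_neg h4]; exact hxy

lemma pI_eq_clampE [DecidableEq S] (Fstar : Finset S) (l u : S → EReal) (w : S → ℝ)
    (δ : ℝ) (s : S) :
    pI Fstar l u w δ s =
      if s ∈ Fstar then clampE (l s) (u s) (δ / w s)
      else clampE (l s) (u s) (-(δ / w s)) := rfl

theorem linf_monotone_feasible [Fintype S] [DecidableEq S]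
    (𝓕 : Finset (Finset S)) (Fstar : Finset S) (c w : S → ℝ) (l u : S → EReal)
    (hw : ∀ s, 0 < w s) (hl : ∀ s, l s ≠ ⊤) (hu : ∀ s, u s ≠ ⊥)
    (hlu : ∀ s, l s ≤ u s) (h𝓕 : 𝓕.Nonempty) (hF : Fstar ∈ 𝓕)
    (δ : ℝ) (hδ : 0 ≤ δ)
    (hfeas : IsFeasibleDev 𝓕 Fstar c l u (pI Fstar l u w δ)) :
    ∀ δ' : ℝ, δ ≤ δ' → IsFeasibleDev 𝓕 Fstar c l u (pI Fstar l u w δ') := by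
  intro δ' hδδ'
  set p := pI Fstar l u w δ with hp
  set p' := pI Fstar l u w δ' with hp'
  -- pointwise monotonicity
  have hin : ∀ s ∈ Fstar, p s ≤ p' s := by
    intro s hs
    rw [hp, hp', pI_eq_clampE, pI_eq_clampE, if_pos hs, if_pos hs]
    exact clampE_mono _ _ (hl s) (hu s) (hlu s)
      (div_le_div_of_nonneg_right hδδ' (hw s).le)
  have hout : ∀ s, s ∉ Fstar → p' s ≤ p s := by
    intro s hs
    rw [hp, hp', pI_eq_clampE, pI_eq_clampE, if_neg hs, if_neg hs]
    exact clampE_mono _ _ (hl s) (hu s) (hlu s)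
      (neg_le_neg (div_le_div_of_nonneg_right hδδ' (hw s).le))
  constructor
  · intro s
    rw [hp', pI_eq_clampE]
    split_ifs <;> exact clampE_mem _ _ (hl s) (hu s) (hlu s) _
  · intro F hFmem
    have key : ∀ q : S → ℝ,
        (∑ s ∈ Fstar, (c s - q s) ≤ ∑ s ∈ F, (c s - q s)) ↔
        (∑ s ∈ Fstar \ F, (c s - q s) ≤ ∑ s ∈ F \ Fstar, (c s - q s)) := by
      intro q
      rw [← Finset.sum_inter_add_sum_sdiff Fstar F fun s => c s - q s,
          ← Finset.sum_inter_add_sum_sdiff F Fstar fun s => c s - q s,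
          Finset.inter_comm F Fstar]
      exact add_le_add_iff_left _
    rw [key]
    have h0 : ∑ s ∈ Fstar \ F, (c s - p s) ≤ ∑ s ∈ F \ Fstar, (c s - p s) :=
      (key p).mp (hfeas.2 F hFmem)
    calc ∑ s ∈ Fstar \ F, (c s - p' s)
        ≤ ∑ s ∈ Fstar \ F, (c s - p s) := by
          apply Finset.sum_le_sum
          intro s hs
          exact sub_le_sub_left (hin s (Finset.mem_sdiff.mp hs).1) _
      _ ≤ ∑ s ∈ F \ Fstar, (c s - p s) := h0
      _ ≤ ∑ s ∈ F \ Fstar, (c s - p' s) := by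
          apply Finset.sum_le_sum
          intro s hs
          exact sub_le_sub_left (hout s (Finset.mem_sdiff.mp hs).2) _
end
end

section
/- For F ∈ 𝓕 define W(F) := 1 / ( Σ_{s ∈ F*\F, u(s) = +∞} 1/w(s) + Σ_{s ∈ F\F*, ℓ(s) = −∞} 1/w(s) ) if this divisor is nonzero, and W(F) := 0 otherwise. Let m₁ := max{ w(s)·|u(s)| : s ∈ F*, u(s) ≠ +∞ }, m₂ := max{ w(s)·|ℓ(s)| : s ∈ S\F*, ℓ(s) ≠ −∞ }, m₃ := max_{F ∈ 𝓕} W(F)·( c(F*) − c(F) − Σ_{s ∈ F*\F, u(s) ≠ +∞} u(s) + Σ_{s ∈ F\F*, ℓ(s) ≠ −∞} ℓ(s) ), where the maximum of an empty set is −∞, and set m := max{0, m₁, m₂, m₃}. Then a feasible deviation vector exists (i.e., the constrained minimum-cost inverse optimization problem under the weighted ℓ∞-norm objective is feasible) if and only if p^m is a feasible deviation vector. -/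
/-!
Only the direction "feasible ⇒ `p^m` feasible" has content. Clamping keeps `p^m` within the
bounds, so it remains to compare `c(F*) - c(F)` with `p^m(F* \ F) - p^m(F \ F*)` for each
`F ∈ 𝓕`. Since `m ≥ m₁, m₂`, the vector `p^m` sits exactly at the finite bound on every element
of the symmetric difference whose relevant bound is finite, and reaches at least `m / w(s)`
(resp. at most `-m / w(s)`) on the others; hence the difference is at least `m · D + U - L`,
where `D` is the divisor of `W(F)` and `U`, `L` are the finite bound sums of `m₃`. If `D > 0`,
then `m ≥ m₃` gives `c(F*) - c(F) ≤ m · D + U - L`; if `D = 0`, every bound involved is finite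
and the same inequality (with `m · D = 0`) follows from any feasible deviation vector.
-/

open Finset

noncomputable section

variable {S : Type*}

/-- `W(F)` from the feasibility characterization for the weighted ℓ∞-norm. -/
def Wf [DecidableEq S] (Fstar F : Finset S) (l u : S → EReal) (w : S → ℝ) : ℝ :=
  if (∑ s ∈ (Fstar \ F).filter (fun s => u s = ⊤), (w s)⁻¹)
      + (∑ s ∈ (F \ Fstar).filter (fun s => l s = ⊥), (w s)⁻¹) ≠ 0 then
    1 / ((∑ s ∈ (Fstar \ F).filter (fun s => u s = ⊤), (w s)⁻¹)
      + (∑ s ∈ (F \ Fstar).filter (fun s => l s = ⊥), (w s)⁻¹))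
  else 0

/-- The bound `m = max{0, m₁, m₂, m₃}` from the feasibility characterization
for the weighted ℓ∞-norm (maxima over empty sets contribute nothing). -/
def mI [Fintype S] [DecidableEq S] (𝓕 : Finset (Finset S)) (Fstar : Finset S)
    (c : S → ℝ) (l u : S → EReal) (w : S → ℝ) : ℝ :=
  max 0 (max (max
    (((Fstar.filter fun s => u s ≠ ⊤).image fun s => w s * |(u s).toReal|).max.unbotD 0)
    (((((univ : Finset S) \ Fstar).filter fun s => l s ≠ ⊥).image
        fun s => w s * |(l s).toReal|).max.unbotD 0))
    ((𝓕.image fun F => Wf Fstar F l u w *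
      ((∑ s ∈ Fstar, c s) - (∑ s ∈ F, c s)
        - ∑ s ∈ (Fstar \ F).filter (fun s => u s ≠ ⊤), (u s).toReal
        + ∑ s ∈ (F \ Fstar).filter (fun s => l s ≠ ⊥), (l s).toReal)).max.unbotD 0))

def clampReal (a b : EReal) (x : ℝ) : ℝ :=
  if (x : EReal) < a then a.toReal else if b < (x : EReal) then b.toReal else x

section clampReal

variable {a b : EReal} {x : ℝ}

lemma clampReal_mem (ha : a ≠ ⊤) (hb : b ≠ ⊥) (hab : a ≤ b) :
    a ≤ (clampReal a b x : EReal) ∧ (clampReal a b x : EReal) ≤ b := by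
  unfold clampReal
  split_ifs with hxa hbx
  · rw [EReal.coe_toReal ha (ne_bot_of_gt hxa)]
    exact ⟨le_rfl, hab⟩
  · rw [EReal.coe_toReal (ne_top_of_lt hbx) hb]
    exact ⟨hab, le_rfl⟩
  · exact ⟨not_lt.mp hxa, not_lt.mp hbx⟩

lemma le_clampReal_top (ha : a ≠ ⊤) : x ≤ clampReal a ⊤ x := by
  unfold clampReal
  split_ifs with hxa hbx
  · rw [← EReal.coe_le_coe_iff, EReal.coe_toReal ha (ne_bot_of_gt hxa)]
    exact hxa.le
  · exact absurd hbx not_top_lt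
  · exact le_rfl

lemma clampReal_bot_le (hb : b ≠ ⊥) : clampReal ⊥ b x ≤ x := by
  unfold clampReal
  split_ifs with hxa hbx
  · exact absurd hxa not_lt_bot
  · rw [← EReal.coe_le_coe_iff, EReal.coe_toReal (ne_top_of_lt hbx) hb]
    exact hbx.le
  · exact le_rfl

lemma clampReal_of_le (hab : a ≤ b) (hbx : b ≤ x) : clampReal a b x = b.toReal := by
  unfold clampReal
  split_ifs with hxa hbx'
  · exact absurd (hbx.trans_lt hxa) (not_lt.mpr hab)
  · rfl
  · rw [le_antisymm hbx (not_lt.mp hbx'), EReal.toReal_coe]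

lemma clampReal_of_ge (hab : a ≤ b) (hxa : (x : EReal) ≤ a) : clampReal a b x = a.toReal := by
  unfold clampReal
  split_ifs with hxa' hbx
  · rfl
  · exact absurd (hab.trans_lt hbx) (not_lt.mpr hxa)
  · rw [← le_antisymm hxa (not_lt.mp hxa'), EReal.toReal_coe]

end clampReal

section pI

variable [DecidableEq S] {Fstar : Finset S} {l u : S → EReal} {w : S → ℝ} {δ : ℝ} {s : S}

lemma pI_of_mem (hs : s ∈ Fstar) : pI Fstar l u w δ s = clampReal (l s) (u s) (δ / w s) :=
  if_pos hs

lemma pI_of_notMem (hs : s ∉ Fstar) :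
    pI Fstar l u w δ s = clampReal (l s) (u s) (-(δ / w s)) :=
  if_neg hs

lemma pI_mem_bounds (hl : ∀ s, l s ≠ ⊤) (hu : ∀ s, u s ≠ ⊥) (hlu : ∀ s, l s ≤ u s) (s : S) :
    l s ≤ (pI Fstar l u w δ s : EReal) ∧ (pI Fstar l u w δ s : EReal) ≤ u s := by
  by_cases hs : s ∈ Fstar
  · rw [pI_of_mem hs]; exact clampReal_mem (hl s) (hu s) (hlu s)
  · rw [pI_of_notMem hs]; exact clampReal_mem (hl s) (hu s) (hlu s)

lemma div_le_pI_of_eq_top (hs : s ∈ Fstar) (hls : l s ≠ ⊤) (hus : u s = ⊤) :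
    δ / w s ≤ pI Fstar l u w δ s := by
  rw [pI_of_mem hs, hus]
  exact le_clampReal_top hls

lemma pI_le_neg_div_of_eq_bot (hs : s ∉ Fstar) (hus : u s ≠ ⊥) (hls : l s = ⊥) :
    pI Fstar l u w δ s ≤ -(δ / w s) := by
  rw [pI_of_notMem hs, hls]
  exact clampReal_bot_le hus

lemma pI_eq_toReal_upper (hs : s ∈ Fstar) (hws : 0 < w s) (hlu : l s ≤ u s) (hus : u s ≠ ⊥)
    (hut : u s ≠ ⊤) (hδ : w s * |(u s).toReal| ≤ δ) : pI Fstar l u w δ s = (u s).toReal := by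
  have hle : (u s).toReal ≤ δ / w s :=
    (le_abs_self _).trans ((le_div_iff₀ hws).mpr (by linarith))
  rw [pI_of_mem hs]
  refine clampReal_of_le hlu ?_
  rw [← EReal.coe_toReal hut hus]
  exact EReal.coe_le_coe_iff.mpr hle

lemma pI_eq_toReal_lower (hs : s ∉ Fstar) (hws : 0 < w s) (hlu : l s ≤ u s) (hls : l s ≠ ⊤)
    (hlb : l s ≠ ⊥) (hδ : w s * |(l s).toReal| ≤ δ) : pI Fstar l u w δ s = (l s).toReal := by
  have hle : -(δ / w s) ≤ (l s).toReal :=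
    (abs_le.mp ((le_div_iff₀ hws).mpr (by linarith))).1
  rw [pI_of_notMem hs]
  refine clampReal_of_ge hlu ?_
  rw [← EReal.coe_toReal hls hlb]
  exact EReal.coe_le_coe_iff.mpr hle

lemma mul_sum_inv_add_sum_toReal_le_sum_pI (hw : ∀ s, 0 < w s) (hl : ∀ s, l s ≠ ⊤)
    (hu : ∀ s, u s ≠ ⊥) (hlu : ∀ s, l s ≤ u s) {A : Finset S} (hA : A ⊆ Fstar)
    (hδ : ∀ s ∈ Fstar, u s ≠ ⊤ → w s * |(u s).toReal| ≤ δ) :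
    δ * ∑ s ∈ A with u s = ⊤, (w s)⁻¹ + ∑ s ∈ A with u s ≠ ⊤, (u s).toReal
      ≤ ∑ s ∈ A, pI Fstar l u w δ s := by
  rw [← sum_filter_add_sum_filter_not A (fun s => u s = ⊤), mul_sum]
  refine add_le_add (sum_le_sum fun s hs => ?_) (sum_le_sum fun s hs => ?_)
  · obtain ⟨hsA, hus⟩ := mem_filter.mp hs
    exact (div_eq_mul_inv δ (w s)).symm.le.trans (div_le_pI_of_eq_top (hA hsA) (hl s) hus)
  · obtain ⟨hsA, hus⟩ := mem_filter.mp hs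
    exact (pI_eq_toReal_upper (hA hsA) (hw s) (hlu s) (hu s) hus (hδ s (hA hsA) hus)).ge

lemma sum_pI_le_neg_mul_sum_inv_add_sum_toReal (hw : ∀ s, 0 < w s) (hl : ∀ s, l s ≠ ⊤)
    (hu : ∀ s, u s ≠ ⊥) (hlu : ∀ s, l s ≤ u s) {B : Finset S} (hB : Disjoint B Fstar)
    (hδ : ∀ s ∉ Fstar, l s ≠ ⊥ → w s * |(l s).toReal| ≤ δ) :
    ∑ s ∈ B, pI Fstar l u w δ s
      ≤ -(δ * ∑ s ∈ B with l s = ⊥, (w s)⁻¹) + ∑ s ∈ B with l s ≠ ⊥, (l s).toReal := by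
  rw [← sum_filter_add_sum_filter_not B (fun s => l s = ⊥), mul_sum, ← sum_neg_distrib]
  refine add_le_add (sum_le_sum fun s hs => ?_) (sum_le_sum fun s hs => ?_)
  · obtain ⟨hsB, hls⟩ := mem_filter.mp hs
    exact (pI_le_neg_div_of_eq_bot (disjoint_left.mp hB hsB) (hu s) hls).trans
      (neg_le_neg (div_eq_mul_inv δ (w s)).le)
  · obtain ⟨hsB, hls⟩ := mem_filter.mp hs
    have hs' := disjoint_left.mp hB hsB
    exact (pI_eq_toReal_lower hs' (hw s) (hlu s) (hl s) hls (hδ s hs' hls)).le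

end pI

lemma sum_sub_le_sum_sub_iff {ι : Type*} [DecidableEq ι] (A B : Finset ι) (c p : ι → ℝ) :
    ∑ s ∈ A, (c s - p s) ≤ ∑ s ∈ B, (c s - p s) ↔
      ∑ s ∈ A, c s - ∑ s ∈ B, c s ≤ ∑ s ∈ A \ B, p s - ∑ s ∈ B \ A, p s := by
  rw [sum_sub_distrib, sum_sub_distrib, sum_sdiff_sub_sum_sdiff]
  constructor <;> intro h <;> linarith

section gap

variable [DecidableEq S] {𝓕 : Finset (Finset S)} {Fstar F : Finset S} {c w : S → ℝ}
  {l u : S → EReal} {δ : ℝ}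

/-- The divisor in the definition of `W(F)`. -/
def unboundedInvWeight (Fstar F : Finset S) (l u : S → EReal) (w : S → ℝ) : ℝ :=
  (∑ s ∈ (Fstar \ F).filter (fun s => u s = ⊤), (w s)⁻¹)
    + (∑ s ∈ (F \ Fstar).filter (fun s => l s = ⊥), (w s)⁻¹)

/-- The bracket multiplied by `W(F)` in the definition of `m₃`. -/
def boundedCostGap (Fstar F : Finset S) (c : S → ℝ) (l u : S → EReal) : ℝ :=
  (∑ s ∈ Fstar, c s) - (∑ s ∈ F, c s)
    - ∑ s ∈ (Fstar \ F).filter (fun s => u s ≠ ⊤), (u s).toReal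
    + ∑ s ∈ (F \ Fstar).filter (fun s => l s ≠ ⊥), (l s).toReal

lemma Wf_of_ne_zero (h : unboundedInvWeight Fstar F l u w ≠ 0) :
    Wf Fstar F l u w = 1 / unboundedInvWeight Fstar F l u w :=
  if_pos h

lemma unboundedInvWeight_eq_zero_iff (hw : ∀ s, 0 < w s) :
    unboundedInvWeight Fstar F l u w = 0 ↔
      (∀ s ∈ Fstar \ F, u s ≠ ⊤) ∧ ∀ s ∈ F \ Fstar, l s ≠ ⊥ := by
  have hinv : ∀ s, 0 ≤ (w s)⁻¹ := fun s => (inv_pos.mpr (hw s)).le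
  rw [unboundedInvWeight, add_eq_zero_iff_of_nonneg (sum_nonneg fun s _ => hinv s)
    (sum_nonneg fun s _ => hinv s), sum_eq_zero_iff_of_nonneg fun s _ => hinv s,
    sum_eq_zero_iff_of_nonneg fun s _ => hinv s]
  simp only [mem_filter, inv_eq_zero, (hw _).ne', imp_false, not_and, ne_eq]

lemma unboundedInvWeight_nonneg (hw : ∀ s, 0 < w s) : 0 ≤ unboundedInvWeight Fstar F l u w :=
  add_nonneg (sum_nonneg fun s _ => (inv_pos.mpr (hw s)).le)
    (sum_nonneg fun s _ => (inv_pos.mpr (hw s)).le)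

lemma boundedCostGap_nonpos {p : S → ℝ} (hp : IsFeasibleDev 𝓕 Fstar c l u p) (hF : F ∈ 𝓕)
    (hut : ∀ s ∈ Fstar \ F, u s ≠ ⊤) (hlb : ∀ s ∈ F \ Fstar, l s ≠ ⊥) :
    boundedCostGap Fstar F c l u ≤ 0 := by
  have hcost := (sum_sub_le_sum_sub_iff Fstar F c p).mp (hp.2 F hF)
  have hupper : ∑ s ∈ Fstar \ F, p s ≤ ∑ s ∈ Fstar \ F, (u s).toReal :=
    sum_le_sum fun s hs => by
      simpa using EReal.toReal_le_toReal (hp.1 s).2 (EReal.coe_ne_bot _) (hut s hs)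
  have hlower : ∑ s ∈ F \ Fstar, (l s).toReal ≤ ∑ s ∈ F \ Fstar, p s :=
    sum_le_sum fun s hs => by
      simpa using EReal.toReal_le_toReal (hp.1 s).1 (hlb s hs) (EReal.coe_ne_top _)
  rw [boundedCostGap, filter_true_of_mem hut, filter_true_of_mem hlb]
  linarith

lemma boundedCostGap_le_mul {p : S → ℝ} (hw : ∀ s, 0 < w s)
    (hp : IsFeasibleDev 𝓕 Fstar c l u p) (hF : F ∈ 𝓕)
    (hδ : Wf Fstar F l u w * boundedCostGap Fstar F c l u ≤ δ) :
    boundedCostGap Fstar F c l u ≤ δ * unboundedInvWeight Fstar F l u w := by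
  by_cases hD : unboundedInvWeight Fstar F l u w = 0
  · obtain ⟨hut, hlb⟩ := (unboundedInvWeight_eq_zero_iff hw).mp hD
    rw [hD, mul_zero]
    exact boundedCostGap_nonpos hp hF hut hlb
  · have hDpos := (unboundedInvWeight_nonneg hw).lt_of_ne' hD
    rw [Wf_of_ne_zero hD, one_div_mul_eq_div, div_le_iff₀ hDpos] at hδ
    exact hδ

lemma sub_le_sum_pI_sdiff_sub (hw : ∀ s, 0 < w s) (hl : ∀ s, l s ≠ ⊤) (hu : ∀ s, u s ≠ ⊥)
    (hlu : ∀ s, l s ≤ u s)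
    (hgap : boundedCostGap Fstar F c l u ≤ δ * unboundedInvWeight Fstar F l u w)
    (hδu : ∀ s ∈ Fstar, u s ≠ ⊤ → w s * |(u s).toReal| ≤ δ)
    (hδl : ∀ s ∉ Fstar, l s ≠ ⊥ → w s * |(l s).toReal| ≤ δ) :
    ∑ s ∈ Fstar, c s - ∑ s ∈ F, c s
      ≤ ∑ s ∈ Fstar \ F, pI Fstar l u w δ s - ∑ s ∈ F \ Fstar, pI Fstar l u w δ s := by
  have hA := mul_sum_inv_add_sum_toReal_le_sum_pI hw hl hu hlu sdiff_subset hδu (A := Fstar \ F)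
  have hB := sum_pI_le_neg_mul_sum_inv_add_sum_toReal hw hl hu hlu sdiff_disjoint hδl
    (B := F \ Fstar)
  rw [boundedCostGap, unboundedInvWeight] at hgap
  linarith

end gap

section mI

variable [Fintype S] [DecidableEq S] {𝓕 : Finset (Finset S)} {Fstar F : Finset S}
  {c w : S → ℝ} {l u : S → EReal} {s : S}

lemma mul_abs_upper_le_mI (hs : s ∈ Fstar) (hus : u s ≠ ⊤) :
    w s * |(u s).toReal| ≤ mI 𝓕 Fstar c l u w := by
  refine le_max_of_le_right (le_max_of_le_left (le_max_of_le_left ?_))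
  exact WithBot.le_unbotD (le_max (mem_image_of_mem _ (mem_filter.mpr ⟨hs, hus⟩)))

lemma mul_abs_lower_le_mI (hs : s ∉ Fstar) (hls : l s ≠ ⊥) :
    w s * |(l s).toReal| ≤ mI 𝓕 Fstar c l u w := by
  refine le_max_of_le_right (le_max_of_le_left (le_max_of_le_right ?_))
  exact WithBot.le_unbotD (le_max (mem_image_of_mem _
    (mem_filter.mpr ⟨mem_sdiff.mpr ⟨mem_univ s, hs⟩, hls⟩)))

lemma Wf_mul_boundedCostGap_le_mI (hF : F ∈ 𝓕) :
    Wf Fstar F l u w * boundedCostGap Fstar F c l u ≤ mI 𝓕 Fstar c l u w := by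
  refine le_max_of_le_right (le_max_of_le_right ?_)
  exact WithBot.le_unbotD (le_max (mem_image_of_mem
    (fun F => Wf Fstar F l u w * boundedCostGap Fstar F c l u) hF))

end mI

theorem linf_feasibility_characterization_general [Fintype S] [DecidableEq S]
    (𝓕 : Finset (Finset S)) (Fstar : Finset S) (c w : S → ℝ) (l u : S → EReal)
    (hw : ∀ s, 0 < w s) (hl : ∀ s, l s ≠ ⊤) (hu : ∀ s, u s ≠ ⊥)
    (hlu : ∀ s, l s ≤ u s) :
    (∃ p : S → ℝ, IsFeasibleDev 𝓕 Fstar c l u p) ↔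
      IsFeasibleDev 𝓕 Fstar c l u (pI Fstar l u w (mI 𝓕 Fstar c l u w)) := by
  refine ⟨fun ⟨p, hp⟩ => ⟨pI_mem_bounds hl hu hlu, fun F hF => ?_⟩, fun h => ⟨_, h⟩⟩
  rw [sum_sub_le_sum_sub_iff]
  exact sub_le_sum_pI_sdiff_sub hw hl hu hlu
    (boundedCostGap_le_mul hw hp hF (Wf_mul_boundedCostGap_le_mI hF))
    (fun _ hs hus => mul_abs_upper_le_mI hs hus) (fun _ hs hls => mul_abs_lower_le_mI hs hls)

theorem linf_feasibility_characterization [Fintype S] [DecidableEq S]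
    (𝓕 : Finset (Finset S)) (Fstar : Finset S) (c w : S → ℝ) (l u : S → EReal)
    (hw : ∀ s, 0 < w s) (hl : ∀ s, l s ≠ ⊤) (hu : ∀ s, u s ≠ ⊥)
    (hlu : ∀ s, l s ≤ u s) (h𝓕 : 𝓕.Nonempty) (hF : Fstar ∈ 𝓕) :
    (∃ p : S → ℝ, IsFeasibleDev 𝓕 Fstar c l u p) ↔
      IsFeasibleDev 𝓕 Fstar c l u (pI Fstar l u w (mI 𝓕 Fstar c l u w)) :=
  linf_feasibility_characterization_general 𝓕 Fstar c w l u hw hl hu hlu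
end
end

section
/- Consider the constrained inverse optimization problem with multiple cost functions c^1, …, c^k under the weighted ℓ∞-norm objective. Suppose that for each j ∈ [k] the single-cost instance with cost c^j admits an optimal deviation vector, and let δ^j denote its optimum value, i.e., the minimum of ‖·‖_{∞,w} over deviation vectors feasible for cost c^j. Set δ := max{δ^j : j ∈ [k]}. Then p^δ is simultaneously feasible for all costs c^1, …, c^k, and the minimum of ‖·‖_{∞,w} over simultaneously feasible deviation vectors is attained at p^δ and equals δ. -/
open Finset

noncomputable section

variable {S : Type*}

lemma pI_spec_pos [DecidableEq S] {Fstar : Finset S} {l u : S → EReal} {w : S → ℝ} {D : ℝ}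
    {s : S} (hs : s ∈ Fstar) (hws : 0 < w s) (hls : l s ≠ ⊤) (hus : u s ≠ ⊥)
    {r : ℝ} (hrl : l s ≤ (r : EReal)) (hru : (r : EReal) ≤ u s) (hr : |r| ≤ D / w s) :
    r ≤ pI Fstar l u w D s ∧ |pI Fstar l u w D s| ≤ D / w s ∧
      l s ≤ (pI Fstar l u w D s : EReal) ∧ (pI Fstar l u w D s : EReal) ≤ u s := by
  have habs := abs_le.mp hr
  unfold pI
  rw [if_pos hs]
  split_ifs with h1 h2
  · exact absurd (hrl.trans (EReal.coe_le_coe_iff.mpr habs.2)) (not_le.mpr h1)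
  · have hut : u s ≠ ⊤ := by
      intro h; rw [h] at h2; exact (not_top_lt h2).elim
    have hue : ((u s).toReal : EReal) = u s := EReal.coe_toReal hut hus
    have hru' : r ≤ (u s).toReal := by
      rw [← EReal.coe_le_coe_iff, hue]; exact hru
    have huD : (u s).toReal < D / w s := by
      rw [← EReal.coe_lt_coe_iff, hue]; exact h2
    refine ⟨hru', abs_le.mpr ⟨le_trans habs.1 hru', huD.le⟩, ?_, ?_⟩
    · rw [hue]; exact hrl.trans hru
    · rw [hue]
  · have h1' : l s ≤ ((D / w s : ℝ) : EReal) := not_lt.mp h1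
    have h2' : ((D / w s : ℝ) : EReal) ≤ u s := not_lt.mp h2
    have hD : 0 ≤ D / w s := le_trans (abs_nonneg r) hr
    exact ⟨habs.2, by rw [abs_of_nonneg hD], h1', h2'⟩

lemma pI_spec_neg [DecidableEq S] {Fstar : Finset S} {l u : S → EReal} {w : S → ℝ} {D : ℝ}
    {s : S} (hs : s ∉ Fstar) (hws : 0 < w s) (hls : l s ≠ ⊤) (hus : u s ≠ ⊥)
    {r : ℝ} (hrl : l s ≤ (r : EReal)) (hru : (r : EReal) ≤ u s) (hr : |r| ≤ D / w s) :
    pI Fstar l u w D s ≤ r ∧ |pI Fstar l u w D s| ≤ D / w s ∧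
      l s ≤ (pI Fstar l u w D s : EReal) ∧ (pI Fstar l u w D s : EReal) ≤ u s := by
  have habs := abs_le.mp hr
  unfold pI
  rw [if_neg hs]
  split_ifs with h1 h2
  · have hlb : l s ≠ ⊥ := by
      intro h; rw [h] at h1; exact (not_lt_bot h1).elim
    have hle : ((l s).toReal : EReal) = l s := EReal.coe_toReal hls hlb
    have hlr : (l s).toReal ≤ r := by
      rw [← EReal.coe_le_coe_iff, hle]; exact hrl
    have hlD : -(D / w s) < (l s).toReal := by
      rw [← EReal.coe_lt_coe_iff, hle]; exact h1
    refine ⟨hlr, abs_le.mpr ⟨hlD.le, hlr.trans habs.2⟩, ?_, ?_⟩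
    · rw [hle]
    · rw [hle]; exact hrl.trans hru
  · exact absurd ((EReal.coe_le_coe_iff.mpr habs.1).trans hru) (not_le.mpr h2)
  · have h1' : l s ≤ ((-(D / w s) : ℝ) : EReal) := not_lt.mp h1
    have h2' : ((-(D / w s) : ℝ) : EReal) ≤ u s := not_lt.mp h2
    have hD : 0 ≤ D / w s := le_trans (abs_nonneg r) hr
    exact ⟨habs.1, by rw [abs_neg, abs_of_nonneg hD], h1', h2'⟩

theorem linf_multiple_costs [Fintype S] [DecidableEq S] [Nonempty S]
    {J : Type*} [Fintype J] [Nonempty J]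
    (𝓕 : Finset (Finset S)) (Fstar : Finset S) (c : J → S → ℝ) (w : S → ℝ)
    (l u : S → EReal)
    (hw : ∀ s, 0 < w s) (hl : ∀ s, l s ≠ ⊤) (hu : ∀ s, u s ≠ ⊥)
    (hlu : ∀ s, l s ≤ u s) (h𝓕 : 𝓕.Nonempty) (hF : Fstar ∈ 𝓕)
    (δ : J → ℝ)
    (hδ : ∀ j, (∃ p : S → ℝ, IsFeasibleDev 𝓕 Fstar (c j) l u p ∧ normI w p = δ j) ∧
      (∀ p : S → ℝ, IsFeasibleDev 𝓕 Fstar (c j) l u p → δ j ≤ normI w p)) :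
    (∀ j, IsFeasibleDev 𝓕 Fstar (c j) l u
      (pI Fstar l u w ((univ : Finset J).sup' univ_nonempty δ))) ∧
    normI w (pI Fstar l u w ((univ : Finset J).sup' univ_nonempty δ)) =
      (univ : Finset J).sup' univ_nonempty δ ∧
    ∀ q : S → ℝ, (∀ j, IsFeasibleDev 𝓕 Fstar (c j) l u q) →
      (univ : Finset J).sup' univ_nonempty δ ≤ normI w q := by
  set D := (univ : Finset J).sup' univ_nonempty δ with hD
  choose p hfeas hnorm using fun j => (hδ j).1
  have hpb : ∀ j s, |p j s| ≤ D / w s := by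
    intro j s
    have h1 : w s * |p j s| ≤ normI w (p j) := by
      unfold normI; exact le_sup' (fun t => w t * |p j t|) (mem_univ s)
    have h2 : δ j ≤ D := le_sup' δ (mem_univ j)
    rw [hnorm j] at h1
    rw [le_div_iff₀ (hw s)]
    nlinarith
  set P := pI Fstar l u w D with hPdef
  have key : ∀ j s, (s ∈ Fstar → p j s ≤ P s) ∧ (s ∉ Fstar → P s ≤ p j s) ∧
      |P s| ≤ D / w s ∧ l s ≤ (P s : EReal) ∧ (P s : EReal) ≤ u s := by
    intro j s
    have hb := (hfeas j).1 s
    by_cases hs : s ∈ Fstar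
    · obtain ⟨h1, h2, h3, h4⟩ := pI_spec_pos hs (hw s) (hl s) (hu s) hb.1 hb.2 (hpb j s)
      exact ⟨fun _ => h1, fun h => absurd hs h, h2, h3, h4⟩
    · obtain ⟨h1, h2, h3, h4⟩ := pI_spec_neg hs (hw s) (hl s) (hu s) hb.1 hb.2 (hpb j s)
      exact ⟨fun h => absurd h hs, fun _ => h1, h2, h3, h4⟩
  have hPfeas : ∀ j, IsFeasibleDev 𝓕 Fstar (c j) l u P := by
    intro j
    refine ⟨fun s => ⟨(key j s).2.2.2.1, (key j s).2.2.2.2⟩, ?_⟩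
    intro F hFmem
    have hpj := (hfeas j).2 F hFmem
    have h1 : ∑ s ∈ Fstar, (p j s - P s) ≤ ∑ s ∈ F, (p j s - P s) := by
      have hA : ∑ s ∈ Fstar ∩ F, (p j s - P s) + ∑ s ∈ Fstar \ F, (p j s - P s)
          = ∑ s ∈ Fstar, (p j s - P s) := Finset.sum_inter_add_sum_sdiff _ _ _
      have hB : ∑ s ∈ Fstar \ F, (p j s - P s) ≤ 0 :=
        Finset.sum_nonpos fun s hsm =>
          sub_nonpos.mpr ((key j s).1 (Finset.mem_sdiff.mp hsm).1)
      have hC : ∑ s ∈ Fstar ∩ F, (p j s - P s) ≤ ∑ s ∈ F, (p j s - P s) := by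
        apply Finset.sum_le_sum_of_subset_of_nonneg Finset.inter_subset_right
        intro x hx hnx
        exact sub_nonneg.mpr ((key j x).2.1 fun hxF => hnx (Finset.mem_inter.mpr ⟨hxF, hx⟩))
      linarith
    have e1 : ∑ s ∈ Fstar, (c j s - P s)
        = ∑ s ∈ Fstar, (c j s - p j s) + ∑ s ∈ Fstar, (p j s - P s) := by
      rw [← Finset.sum_add_distrib]
      exact Finset.sum_congr rfl fun s _ => by ring
    have e2 : ∑ s ∈ F, (c j s - P s)
        = ∑ s ∈ F, (c j s - p j s) + ∑ s ∈ F, (p j s - P s) := by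
      rw [← Finset.sum_add_distrib]
      exact Finset.sum_congr rfl fun s _ => by ring
    rw [e1, e2]
    linarith
  obtain ⟨j1, -, hj1⟩ := Finset.exists_mem_eq_sup' (univ_nonempty : (univ : Finset J).Nonempty) δ
  have hDeq : D = δ j1 := hj1
  have hnormle : normI w P ≤ D := by
    unfold normI
    apply Finset.sup'_le
    intro s _
    have hm : w s * |P s| ≤ w s * (D / w s) :=
      mul_le_mul_of_nonneg_left (key j1 s).2.2.1 (hw s).le
    have he : w s * (D / w s) = D := by
      rw [mul_comm, div_mul_cancel₀ _ (hw s).ne']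
    linarith
  have hDle : D ≤ normI w P := by
    rw [hDeq]
    exact (hδ j1).2 P (hPfeas j1)
  refine ⟨hPfeas, le_antisymm hnormle hDle, ?_⟩
  intro q hq
  rw [hDeq]
  exact (hδ j1).2 q (hq j1)
end
end

section
/- Suppose w ≡ 1, c is integer-valued, ℓ takes values in ℤ ∪ {−∞}, and u takes values in ℤ ∪ {+∞}. If δ ≥ 0 is such that p^δ is an optimal deviation vector for the constrained minimum-cost inverse optimization problem under the ℓ∞-norm objective, then p^{⌈δ⌉} is an integer-valued feasible deviation vector that minimizes ‖·‖_∞ among all integer-valued feasible deviation vectors. -/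
open Finset

noncomputable section

variable {S : Type*}

/-!
Each coordinate of `p^δ` is `±δ` clamped to `[ℓ(s), u(s)]`. Clamping is monotone, so raising `δ`
raises `p^δ` on `F*` and lowers it off `F*`, which can only improve `F*` against any `F`: hence
`p^⌈δ⌉` is feasible, and it is integral because clamping an integer between integral bounds
gives an integer. If `q` is integral and feasible, `N = ‖q‖∞` is an integer with `ℓ ≤ N` and
`-N ≤ u`. When `δ ≤ N`, also `⌈δ⌉ ≤ N` and the clamped values `±⌈δ⌉` stay in `[-N, N]`.
When `N < δ`, optimality of `p^δ` gives `|p^δ(s)| ≤ N < δ`, so every coordinate of `p^δ` is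
cut off by a bound, and it stays cut off at the same value when `δ` grows to `⌈δ⌉`.
-/

section LinearOrder

variable {α : Type*} [LinearOrder α] {l u x y : α}

theorem max_min_eq_of_max_min_lt (h : max l (min u x) < x) (hxy : x ≤ y) :
    max l (min u y) = max l (min u x) := by
  have hux : u < x := by
    by_contra! hxu
    rw [min_eq_right hxu] at h
    exact (le_max_right l x).not_gt h
  rw [min_eq_left hux.le, min_eq_left (hux.le.trans hxy)]

theorem max_min_eq_of_lt_max_min (h : x < max l (min u x)) (hyx : y ≤ x) :
    max l (min u y) = max l (min u x) := by
  have hxl : x < l := by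
    by_contra! hlx
    exact h.not_ge (max_le hlx (min_le_right u x))
  rw [max_eq_left ((min_le_right u y).trans (hyx.trans hxl.le)),
    max_eq_left ((min_le_right u x).trans hxl.le)]

end LinearOrder

-- `toReal` maps `±⊤` to `0`; the clamped value is finite once `l ≠ ⊤` and `u ≠ ⊥`.
def eclamp (l u : EReal) (a : ℝ) : ℝ :=
  (max l (min u (a : EReal))).toReal

section eclamp

variable {l u : EReal} {a b N : ℝ}

theorem coe_eclamp (hl : l ≠ ⊤) (hu : u ≠ ⊥) : (eclamp l u a : EReal) = max l (min u a) := by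
  refine EReal.coe_toReal (max_lt hl.lt_top ?_).ne ?_
  · exact (min_le_right _ _).trans_lt (EReal.coe_lt_top a)
  · exact ((lt_min hu.bot_lt (EReal.bot_lt_coe a)).trans_le (le_max_right _ _)).ne'

theorem eclamp_eq_ite (hlu : l ≤ u) :
    eclamp l u a = if (a : EReal) < l then l.toReal else if u < a then u.toReal else a := by
  unfold eclamp
  split_ifs with hal hua
  · rw [max_eq_left ((min_le_right _ _).trans hal.le)]
  · rw [min_eq_left hua.le, max_eq_right hlu]
  · rw [min_eq_right (not_lt.1 hua), max_eq_right (not_lt.1 hal), EReal.toReal_coe]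

theorem eclamp_mem_bounds (hl : l ≠ ⊤) (hu : u ≠ ⊥) (hlu : l ≤ u) :
    l ≤ (eclamp l u a : EReal) ∧ (eclamp l u a : EReal) ≤ u := by
  rw [coe_eclamp hl hu]
  exact ⟨le_max_left _ _, max_le hlu (min_le_left _ _)⟩

theorem eclamp_mono (hl : l ≠ ⊤) (hu : u ≠ ⊥) : Monotone (eclamp l u) := fun a b hab => by
  rw [← EReal.coe_le_coe_iff, coe_eclamp hl hu, coe_eclamp hl hu]
  exact max_le_max le_rfl (min_le_min le_rfl (EReal.coe_le_coe_iff.2 hab))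

theorem eclamp_isInt (hl : l = ⊥ ∨ ∃ z : ℤ, l = ((z : ℝ) : EReal))
    (hu : u = ⊤ ∨ ∃ z : ℤ, u = ((z : ℝ) : EReal)) (ha : ∃ z : ℤ, a = z) :
    ∃ z : ℤ, eclamp l u a = z := by
  unfold eclamp
  rcases max_choice l (min u (a : EReal)) with h | h <;> rw [h]
  · rcases hl with rfl | ⟨z, rfl⟩
    exacts [⟨0, by simp⟩, ⟨z, by simp⟩]
  rcases min_choice u (a : EReal) with h | h <;> rw [h]
  · rcases hu with rfl | ⟨z, rfl⟩
    exacts [⟨0, by simp⟩, ⟨z, by simp⟩]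
  · simpa using ha

theorem abs_eclamp_le (hl : l ≤ N) (hu : ((-N : ℝ) : EReal) ≤ u) (ha : |a| ≤ N) :
    |eclamp l u a| ≤ N := by
  have hlow : ((-N : ℝ) : EReal) ≤ max l (min u a) :=
    (le_min hu (EReal.coe_le_coe_iff.2 (neg_le_of_abs_le ha))).trans (le_max_right _ _)
  have hup : max l (min u a) ≤ N :=
    max_le hl ((min_le_right _ _).trans (EReal.coe_le_coe_iff.2 (le_of_abs_le ha)))
  have hfin := EReal.coe_toReal (hup.trans_lt (EReal.coe_lt_top N)).ne
    ((EReal.bot_lt_coe _).trans_le hlow).ne'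
  rw [← hfin] at hlow hup
  exact abs_le.2 ⟨EReal.coe_le_coe_iff.1 hlow, EReal.coe_le_coe_iff.1 hup⟩

theorem eclamp_eq_of_eclamp_lt (hl : l ≠ ⊤) (hu : u ≠ ⊥) (h : eclamp l u a < a) (hab : a ≤ b) :
    eclamp l u b = eclamp l u a := by
  rw [← EReal.coe_lt_coe_iff, coe_eclamp hl hu] at h
  rw [eclamp, eclamp, max_min_eq_of_max_min_lt h (EReal.coe_le_coe_iff.2 hab)]

theorem eclamp_eq_of_lt_eclamp (hl : l ≠ ⊤) (hu : u ≠ ⊥) (h : a < eclamp l u a) (hba : b ≤ a) :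
    eclamp l u b = eclamp l u a := by
  rw [← EReal.coe_lt_coe_iff, coe_eclamp hl hu] at h
  rw [eclamp, eclamp, max_min_eq_of_lt_max_min h (EReal.coe_le_coe_iff.2 hba)]

end eclamp

theorem sum_sub_le_sum_sub_of_le_of_le [DecidableEq S] {Fstar F : Finset S}
    {c p p' : S → ℝ} (hin : ∀ s ∈ Fstar, p s ≤ p' s) (hout : ∀ s ∉ Fstar, p' s ≤ p s)
    (h : ∑ s ∈ Fstar, (c s - p s) ≤ ∑ s ∈ F, (c s - p s)) :
    ∑ s ∈ Fstar, (c s - p' s) ≤ ∑ s ∈ F, (c s - p' s) := by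
  have hp := sum_sdiff_sub_sum_sdiff (s₁ := F) (s₂ := Fstar) (f := fun s => c s - p s)
  have hp' := sum_sdiff_sub_sum_sdiff (s₁ := F) (s₂ := Fstar) (f := fun s => c s - p' s)
  have hFstar : ∑ s ∈ Fstar \ F, (c s - p' s) ≤ ∑ s ∈ Fstar \ F, (c s - p s) :=
    sum_le_sum fun s hs => by linarith [hin s (mem_sdiff.1 hs).1]
  have hF : ∑ s ∈ F \ Fstar, (c s - p s) ≤ ∑ s ∈ F \ Fstar, (c s - p' s) :=
    sum_le_sum fun s hs => by linarith [hout s (mem_sdiff.1 hs).2]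
  linarith

section Deviation

variable [DecidableEq S] {𝓕 : Finset (Finset S)} {Fstar : Finset S} {c : S → ℝ}
  {l u : S → EReal} {w : S → ℝ} {δ δ' : ℝ}

theorem pI_eq_eclamp (hlu : ∀ s, l s ≤ u s) (s : S) :
    pI Fstar l u w δ s = eclamp (l s) (u s) (if s ∈ Fstar then δ / w s else -(δ / w s)) := by
  rw [pI, apply_ite (eclamp (l s) (u s)), eclamp_eq_ite (hlu s), eclamp_eq_ite (hlu s)]

theorem isFeasibleDev_pI_of_le (hl : ∀ s, l s ≠ ⊤) (hu : ∀ s, u s ≠ ⊥) (hlu : ∀ s, l s ≤ u s)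
    (hw : ∀ s, 0 ≤ w s) (hδ : δ ≤ δ') (h : IsFeasibleDev 𝓕 Fstar c l u (pI Fstar l u w δ)) :
    IsFeasibleDev 𝓕 Fstar c l u (pI Fstar l u w δ') := by
  have hdiv : ∀ s, δ / w s ≤ δ' / w s := fun s => div_le_div_of_nonneg_right hδ (hw s)
  refine ⟨fun s => ?_, fun F hF => sum_sub_le_sum_sub_of_le_of_le (fun s hs => ?_)
    (fun s hs => ?_) (h.2 F hF)⟩
  · rw [pI_eq_eclamp hlu]
    exact eclamp_mem_bounds (hl s) (hu s) (hlu s)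
  · simp only [pI_eq_eclamp hlu, if_pos hs]
    exact eclamp_mono (hl s) (hu s) (hdiv s)
  · simp only [pI_eq_eclamp hlu, if_neg hs]
    exact eclamp_mono (hl s) (hu s) (neg_le_neg (hdiv s))

theorem pI_one_isInt (hlu : ∀ s, l s ≤ u s)
    (hlint : ∀ s, l s = ⊥ ∨ ∃ z : ℤ, l s = ((z : ℝ) : EReal))
    (huint : ∀ s, u s = ⊤ ∨ ∃ z : ℤ, u s = ((z : ℝ) : EReal)) (k : ℤ) (s : S) :
    ∃ z : ℤ, pI Fstar l u (fun _ => 1) k s = z := by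
  rw [pI_eq_eclamp hlu, div_one]
  refine eclamp_isInt (hlint s) (huint s) ?_
  split_ifs
  exacts [⟨k, rfl⟩, ⟨-k, by push_cast; rfl⟩]

end Deviation

section Norm

variable [Fintype S] [Nonempty S] {w p : S → ℝ}

theorem mul_abs_le_normI (s : S) : w s * |p s| ≤ normI w p :=
  le_sup' (fun s => w s * |p s|) (mem_univ s)

theorem normI_le {N : ℝ} (h : ∀ s, w s * |p s| ≤ N) : normI w p ≤ N :=
  sup'_le _ _ fun s _ => h s

theorem exists_normI_eq (w p : S → ℝ) : ∃ s, normI w p = w s * |p s| := by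
  obtain ⟨s, -, hs⟩ := exists_mem_eq_sup' univ_nonempty fun s => w s * |p s|
  exact ⟨s, hs⟩

theorem normI_one_isInt (hp : ∀ s, ∃ z : ℤ, p s = z) : ∃ n : ℤ, normI (fun _ => 1) p = n := by
  obtain ⟨s, hs⟩ := exists_normI_eq (fun _ => 1) p
  obtain ⟨z, hz⟩ := hp s
  exact ⟨|z|, by simp [hs, hz]⟩

end Norm

theorem normI_pI_ceil_le [Fintype S] [DecidableEq S] [Nonempty S] {Fstar : Finset S}
    {l u : S → EReal} (hl : ∀ s, l s ≠ ⊤) (hu : ∀ s, u s ≠ ⊥) (hlu : ∀ s, l s ≤ u s)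
    {δ : ℝ} (hδ : 0 ≤ δ) {q : S → ℝ} (hq : ∀ s, l s ≤ (q s : EReal) ∧ (q s : EReal) ≤ u s)
    (hqint : ∀ s, ∃ z : ℤ, q s = z)
    (hopt : normI (fun _ => 1) (pI Fstar l u (fun _ => 1) δ) ≤ normI (fun _ => 1) q) :
    normI (fun _ => 1) (pI Fstar l u (fun _ => 1) (⌈δ⌉ : ℝ)) ≤ normI (fun _ => 1) q := by
  obtain ⟨n, hn⟩ := normI_one_isInt hqint
  set N := normI (fun _ => 1) q
  have hqN (s : S) : |q s| ≤ N := by simpa using mul_abs_le_normI (w := fun _ => 1) (p := q) s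
  have hlN (s : S) : l s ≤ N :=
    (hq s).1.trans (EReal.coe_le_coe_iff.2 ((le_abs_self _).trans (hqN s)))
  have huN (s : S) : ((-N : ℝ) : EReal) ≤ u s :=
    (EReal.coe_le_coe_iff.2 ((neg_le_neg (hqN s)).trans (neg_abs_le _))).trans (hq s).2
  refine normI_le fun s => ?_
  rw [one_mul]
  rcases le_or_gt δ N with hδN | hNδ
  · have hceil : (⌈δ⌉ : ℝ) ≤ N := by
      rw [hn] at hδN ⊢
      exact_mod_cast Int.ceil_le.2 hδN
    have hceil0 : (0 : ℝ) ≤ ⌈δ⌉ := by exact_mod_cast Int.ceil_nonneg hδ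
    rw [pI_eq_eclamp hlu, div_one]
    refine abs_eclamp_le (hlN s) (huN s) ?_
    rwa [apply_ite abs, abs_neg, ite_self, abs_of_nonneg hceil0]
  · have hp : |pI Fstar l u (fun _ => 1) δ s| ≤ N := by
      simpa using (mul_abs_le_normI (w := fun _ => 1) s).trans hopt
    rw [pI_eq_eclamp hlu, div_one] at hp ⊢
    split_ifs at hp ⊢
    · rwa [eclamp_eq_of_eclamp_lt (hl s) (hu s) ((le_of_abs_le hp).trans_lt hNδ) (Int.le_ceil δ)]
    · rwa [eclamp_eq_of_lt_eclamp (hl s) (hu s) ((neg_lt_neg hNδ).trans_le (neg_le_of_abs_le hp))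
        (neg_le_neg (Int.le_ceil δ))]

theorem linf_integral_rounding_general [Fintype S] [DecidableEq S] [Nonempty S]
    (𝓕 : Finset (Finset S)) (Fstar : Finset S) (c : S → ℝ) (l u : S → EReal)
    (hl : ∀ s, l s ≠ ⊤) (hu : ∀ s, u s ≠ ⊥)
    (hlu : ∀ s, l s ≤ u s)
    (hlint : ∀ s, l s = ⊥ ∨ ∃ z : ℤ, l s = ((z : ℝ) : EReal))
    (huint : ∀ s, u s = ⊤ ∨ ∃ z : ℤ, u s = ((z : ℝ) : EReal))
    (δ : ℝ) (hδ : 0 ≤ δ)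
    (hfeas : IsFeasibleDev 𝓕 Fstar c l u (pI Fstar l u (fun _ => 1) δ))
    (hopt : ∀ q : S → ℝ, IsFeasibleDev 𝓕 Fstar c l u q →
      normI (fun _ => 1) (pI Fstar l u (fun _ => 1) δ) ≤ normI (fun _ => 1) q) :
    (∀ s : S, ∃ z : ℤ, pI Fstar l u (fun _ => 1) (⌈δ⌉ : ℝ) s = (z : ℝ)) ∧
    IsFeasibleDev 𝓕 Fstar c l u (pI Fstar l u (fun _ => 1) (⌈δ⌉ : ℝ)) ∧
    ∀ q : S → ℝ, IsFeasibleDev 𝓕 Fstar c l u q → (∀ s : S, ∃ z : ℤ, q s = (z : ℝ)) →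
      normI (fun _ => 1) (pI Fstar l u (fun _ => 1) (⌈δ⌉ : ℝ)) ≤ normI (fun _ => 1) q :=
  ⟨pI_one_isInt hlu hlint huint ⌈δ⌉,
    isFeasibleDev_pI_of_le hl hu hlu (fun _ => zero_le_one) (Int.le_ceil δ) hfeas,
    fun q hq hqint => normI_pI_ceil_le hl hu hlu hδ hq.1 hqint (hopt q hq)⟩

theorem linf_integral_rounding [Fintype S] [DecidableEq S] [Nonempty S]
    (𝓕 : Finset (Finset S)) (Fstar : Finset S) (c : S → ℝ) (l u : S → EReal)
    (hl : ∀ s, l s ≠ ⊤) (hu : ∀ s, u s ≠ ⊥)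
    (hlu : ∀ s, l s ≤ u s) (h𝓕 : 𝓕.Nonempty) (hF : Fstar ∈ 𝓕)
    (hc : ∀ s, ∃ z : ℤ, c s = (z : ℝ))
    (hlint : ∀ s, l s = ⊥ ∨ ∃ z : ℤ, l s = ((z : ℝ) : EReal))
    (huint : ∀ s, u s = ⊤ ∨ ∃ z : ℤ, u s = ((z : ℝ) : EReal))
    (δ : ℝ) (hδ : 0 ≤ δ)
    (hfeas : IsFeasibleDev 𝓕 Fstar c l u (pI Fstar l u (fun _ => 1) δ))
    (hopt : ∀ q : S → ℝ, IsFeasibleDev 𝓕 Fstar c l u q →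
      normI (fun _ => 1) (pI Fstar l u (fun _ => 1) δ) ≤ normI (fun _ => 1) q) :
    (∀ s : S, ∃ z : ℤ, pI Fstar l u (fun _ => 1) (⌈δ⌉ : ℝ) s = (z : ℝ)) ∧
    IsFeasibleDev 𝓕 Fstar c l u (pI Fstar l u (fun _ => 1) (⌈δ⌉ : ℝ)) ∧
    ∀ q : S → ℝ, IsFeasibleDev 𝓕 Fstar c l u q → (∀ s : S, ∃ z : ℤ, q s = (z : ℝ)) →
      normI (fun _ => 1) (pI Fstar l u (fun _ => 1) (⌈δ⌉ : ℝ)) ≤ normI (fun _ => 1) q :=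
  linf_integral_rounding_general 𝓕 Fstar c l u hl hu hlu hlint huint δ hδ hfeas hopt
end
end

section
/- Let p : S → ℝ be any deviation vector satisfying (c−p)(F*) ≤ (c−p)(F) for all F ∈ 𝓕. Then for every F ∈ 𝓕 with F ≠ F*, the weighted ℓ∞-norm of p satisfies ‖p‖_{∞,w} ≥ (c(F*) − c(F)) / ( (1/w)(F* △ F) ). -/
open Finset

noncomputable section

variable {S : Type*}

theorem linf_lower_bound [Fintype S] [DecidableEq S] [Nonempty S]
    (𝓕 : Finset (Finset S)) (Fstar : Finset S) (c w : S → ℝ)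
    (hw : ∀ s, 0 < w s) (h𝓕 : 𝓕.Nonempty) (hF : Fstar ∈ 𝓕)
    (p : S → ℝ)
    (hp : ∀ F ∈ 𝓕, ∑ s ∈ Fstar, (c s - p s) ≤ ∑ s ∈ F, (c s - p s)) :
    ∀ F ∈ 𝓕, F ≠ Fstar →
      ((∑ s ∈ Fstar, c s) - (∑ s ∈ F, c s)) /
        (∑ s ∈ (Fstar \ F) ∪ (F \ Fstar), (w s)⁻¹) ≤ normI w p := by
  intro F hFmem hne
  set D := (Fstar \ F) ∪ (F \ Fstar) with hD
  have hDne : D.Nonempty := by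
    rw [Finset.nonempty_iff_ne_empty]
    intro h
    apply hne
    have h1 : Fstar \ F = ∅ := by
      have := Finset.union_eq_empty.mp h; exact this.1
    have h2 : F \ Fstar = ∅ := by
      have := Finset.union_eq_empty.mp h; exact this.2
    exact le_antisymm (Finset.sdiff_eq_empty_iff_subset.mp h2)
      (Finset.sdiff_eq_empty_iff_subset.mp h1)
  have hdenom : 0 < ∑ s ∈ D, (w s)⁻¹ :=
    Finset.sum_pos (fun s _ => inv_pos.mpr (hw s)) hDne
  rw [div_le_iff₀ hdenom]
  -- step 1: c(F*) - c(F) ≤ p(F*) - p(F)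
  have h1 : (∑ s ∈ Fstar, c s) - (∑ s ∈ F, c s) ≤
      (∑ s ∈ Fstar, p s) - (∑ s ∈ F, p s) := by
    have := hp F hFmem
    simp only [Finset.sum_sub_distrib] at this
    linarith
  -- step 2: split over symmetric difference
  have hsplit : ∀ (A B : Finset S), (∑ s ∈ A, p s) = (∑ s ∈ A \ B, p s) + ∑ s ∈ A ∩ B, p s := by
    intro A B
    rw [← Finset.sum_union (Finset.disjoint_sdiff_inter A B), Finset.sdiff_union_inter]
  have h2 : (∑ s ∈ Fstar, p s) - (∑ s ∈ F, p s)
      = (∑ s ∈ Fstar \ F, p s) - ∑ s ∈ F \ Fstar, p s := by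
    rw [hsplit Fstar F, hsplit F Fstar, Finset.inter_comm F Fstar]
    ring
  -- step 3: bound by sum of absolute values
  have h3 : (∑ s ∈ Fstar \ F, p s) - (∑ s ∈ F \ Fstar, p s) ≤ ∑ s ∈ D, |p s| := by
    rw [hD, Finset.sum_union (disjoint_sdiff_sdiff)]
    have ha : (∑ s ∈ Fstar \ F, p s) ≤ ∑ s ∈ Fstar \ F, |p s| :=
      Finset.sum_le_sum fun s _ => le_abs_self _
    have hb : -(∑ s ∈ F \ Fstar, p s) ≤ ∑ s ∈ F \ Fstar, |p s| := by
      rw [← Finset.sum_neg_distrib]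
      exact Finset.sum_le_sum fun s _ => neg_le_abs _
    linarith
  -- step 4: |p s| ≤ normI w p / w s
  have h4 : ∑ s ∈ D, |p s| ≤ normI w p * ∑ s ∈ D, (w s)⁻¹ := by
    rw [Finset.mul_sum]
    refine Finset.sum_le_sum fun s _ => ?_
    have hle : w s * |p s| ≤ normI w p :=
      Finset.le_sup' (fun s => w s * |p s|) (Finset.mem_univ s)
    rw [← div_eq_mul_inv, le_div_iff₀ (hw s), mul_comm]
    exact hle
  linarith
end
end

section
/- Let d ≥ 0 and let F_d ∈ 𝓕 be a minimum c_d-cost member of 𝓕 (i.e., c_d(F_d) ≤ c_d(F) for all F ∈ 𝓕) with c_d(F*) > c_d(F_d). If (F* △ F_d) ∩ S_d = ∅, then no feasible deviation vector exists for the constrained minimum-cost inverse optimization problem under the weighted ℓ∞-norm objective. -/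
open Finset

noncomputable section

variable {S : Type*}

/-- The set `S_d = {s ∈ F* : d < w(s)·u(s)} ∪ {s ∉ F* : d > w(s)·ℓ(s)}`
(conditions interpreted in the extended reals). -/
def Sd [Fintype S] [DecidableEq S] (Fstar : Finset S) (l u : S → EReal)
    (w : S → ℝ) (d : ℝ) : Finset S :=
  (univ : Finset S).filter fun s =>
    if s ∈ Fstar then ((d : ℝ) : EReal) < ((w s : ℝ) : EReal) * u s
    else ((w s : ℝ) : EReal) * l s < ((d : ℝ) : EReal)

/-- The cost `c_d(F)` of `F` with respect to `c_d = c - p^d`. -/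
def costd [DecidableEq S] (Fstar : Finset S) (c : S → ℝ) (l u : S → EReal)
    (w : S → ℝ) (d : ℝ) (F : Finset S) : ℝ :=
  ∑ s ∈ F, (c s - pI Fstar l u w d s)

/-- The step length `δ` of the Newton-type algorithm for the weighted ℓ∞-norm
objective, computed in the extended reals (minima over empty sets are `+∞`,
and terms with `u(s) = +∞` or `ℓ(s) = −∞` are `+∞`). -/
def deltaStep [Fintype S] [DecidableEq S] (Fstar : Finset S) (c : S → ℝ)
    (l u : S → EReal) (w : S → ℝ) (d : ℝ) (Fd : Finset S) : EReal :=
  min ((((costd Fstar c l u w d Fstar - costd Fstar c l u w d Fd) /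
        (∑ s ∈ ((Fstar \ Fd) ∪ (Fd \ Fstar)) ∩ Sd Fstar l u w d, (w s)⁻¹) : ℝ) : EReal))
    (min ((Fstar ∩ Sd Fstar l u w d).inf fun s => u s - ((d / w s : ℝ) : EReal))
         ((Sd Fstar l u w d \ Fstar).inf fun s => ((d / w s : ℝ) : EReal) - l s))


lemma pI_eq_u {S : Type*} [DecidableEq S] (Fstar : Finset S) (l u : S → EReal) (w : S → ℝ)
    (d : ℝ) (s : S) (hs : s ∈ Fstar) (hw : 0 < w s) (hub : u s ≠ ⊥) (hlu : l s ≤ u s)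
    (hle : ((w s : ℝ) : EReal) * u s ≤ ((d : ℝ) : EReal)) :
    pI Fstar l u w d s = (u s).toReal ∧ u s ≠ ⊤ := by
  have hutop : u s ≠ ⊤ := by
    intro h
    rw [h, EReal.mul_top_of_pos (by exact_mod_cast hw)] at hle
    exact (EReal.coe_ne_top d) (top_le_iff.mp hle)
  refine ⟨?_, hutop⟩
  set r := (u s).toReal with hrd
  have hr : ((r : ℝ) : EReal) = u s := EReal.coe_toReal hutop hub
  have hwr : w s * r ≤ d := by
    rw [← EReal.coe_le_coe_iff, EReal.coe_mul, hr]; exact hle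
  have hrle : r ≤ d / w s := (le_div_iff₀ hw).mpr (by linarith [mul_comm (w s) r])
  unfold pI
  rw [if_pos hs]
  have h1 : ¬ (((d / w s : ℝ) : EReal) < l s) := by
    rw [not_lt]
    calc l s ≤ u s := hlu
    _ = ((r : ℝ) : EReal) := hr.symm
    _ ≤ _ := by exact_mod_cast hrle
  rw [if_neg h1]
  by_cases h2 : u s < ((d / w s : ℝ) : EReal)
  · rw [if_pos h2]
  · rw [if_neg h2]
    have h3 : ((d / w s : ℝ) : EReal) ≤ ((r : ℝ) : EReal) := by rw [hr]; exact not_lt.mp h2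
    have h4 : d / w s ≤ r := by exact_mod_cast h3
    linarith

lemma pI_eq_l {S : Type*} [DecidableEq S] (Fstar : Finset S) (l u : S → EReal) (w : S → ℝ)
    (d : ℝ) (s : S) (hs : s ∉ Fstar) (hw : 0 < w s) (hd : 0 ≤ d) (hlt : l s ≠ ⊤)
    (hlu : l s ≤ u s) (hle : ((d : ℝ) : EReal) ≤ ((w s : ℝ) : EReal) * l s) :
    pI Fstar l u w d s = (l s).toReal ∧ l s ≠ ⊥ := by
  have hlb : l s ≠ ⊥ := by
    intro h
    rw [h, EReal.mul_bot_of_pos (by exact_mod_cast hw)] at hle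
    exact (EReal.coe_ne_bot d) (le_bot_iff.mp hle)
  refine ⟨?_, hlb⟩
  set q := (l s).toReal with hqd
  have hq : ((q : ℝ) : EReal) = l s := EReal.coe_toReal hlt hlb
  have hwq : d ≤ w s * q := by
    rw [← EReal.coe_le_coe_iff, EReal.coe_mul, hq]; exact hle
  have hqge : d / w s ≤ q := (div_le_iff₀ hw).mpr (by linarith [mul_comm (w s) q])
  have hdw : 0 ≤ d / w s := div_nonneg hd hw.le
  unfold pI
  rw [if_neg hs]
  by_cases h1 : ((-(d / w s) : ℝ) : EReal) < l s
  · rw [if_pos h1]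
  · rw [if_neg h1]
    have h3 : ((q : ℝ) : EReal) ≤ ((-(d / w s) : ℝ) : EReal) := by rw [hq]; exact not_lt.mp h1
    have h4 : q ≤ -(d / w s) := by exact_mod_cast h3
    have h5 : u s < ((-(d / w s) : ℝ) : EReal) → False := by
      intro h
      have := lt_of_le_of_lt (le_trans (by exact_mod_cast (show ((q:ℝ):EReal) ≤ u s from hq ▸ hlu)) le_rfl) h
      have h6 : ((q : ℝ) : EReal) < ((-(d / w s) : ℝ) : EReal) := lt_of_le_of_lt (hq ▸ hlu) h
      have : q < -(d / w s) := by exact_mod_cast h6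
      linarith
    rw [if_neg h5]
    linarith

theorem linf_algo_infeasibility [Fintype S] [DecidableEq S]
    (𝓕 : Finset (Finset S)) (Fstar : Finset S) (c w : S → ℝ) (l u : S → EReal)
    (hw : ∀ s, 0 < w s) (hl : ∀ s, l s ≠ ⊤) (hu : ∀ s, u s ≠ ⊥)
    (hlu : ∀ s, l s ≤ u s) (h𝓕 : 𝓕.Nonempty) (hF : Fstar ∈ 𝓕)
    (d : ℝ) (hd : 0 ≤ d) (Fd : Finset S) (hFd : Fd ∈ 𝓕)
    (hmin : ∀ F ∈ 𝓕, costd Fstar c l u w d Fd ≤ costd Fstar c l u w d F)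
    (hgt : costd Fstar c l u w d Fd < costd Fstar c l u w d Fstar)
    (hempty : ((Fstar \ Fd) ∪ (Fd \ Fstar)) ∩ Sd Fstar l u w d = ∅) :
    ¬ ∃ p : S → ℝ, IsFeasibleDev 𝓕 Fstar c l u p := by
  rintro ⟨p, hbnd, hfeas⟩
  have h1 := hfeas Fd hFd
  have hnotin : ∀ s ∈ (Fstar \ Fd) ∪ (Fd \ Fstar), s ∉ Sd Fstar l u w d := by
    intro s hs hsd
    have : s ∈ (((Fstar \ Fd) ∪ (Fd \ Fstar)) ∩ Sd Fstar l u w d) := mem_inter.mpr ⟨hs, hsd⟩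
    simp [hempty] at this
  -- pointwise bounds on the symmetric difference
  have key1 : ∀ s ∈ Fstar \ Fd, c s - pI Fstar l u w d s ≤ c s - p s := by
    intro s hs
    have hsF : s ∈ Fstar := (mem_sdiff.mp hs).1
    have hns := hnotin s (mem_union_left _ hs)
    have hcond : ¬ (((d : ℝ) : EReal) < ((w s : ℝ) : EReal) * u s) := by
      intro hc
      exact hns (mem_filter.mpr ⟨mem_univ s, by simp [hsF, hc]⟩)
    have hle : ((w s : ℝ) : EReal) * u s ≤ ((d : ℝ) : EReal) := not_lt.mp hcond
    obtain ⟨hpi, hutop⟩ := pI_eq_u Fstar l u w d s hsF (hw s) (hu s) (hlu s) hle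
    have hps : p s ≤ (u s).toReal := by
      have := (hbnd s).2
      rw [← EReal.coe_toReal hutop (hu s)] at this
      exact_mod_cast this
    rw [hpi]; linarith
  have key2 : ∀ s ∈ Fd \ Fstar, c s - p s ≤ c s - pI Fstar l u w d s := by
    intro s hs
    have hsF : s ∉ Fstar := (mem_sdiff.mp hs).2
    have hns := hnotin s (mem_union_right _ hs)
    have hcond : ¬ (((w s : ℝ) : EReal) * l s < ((d : ℝ) : EReal)) := by
      intro hc
      exact hns (mem_filter.mpr ⟨mem_univ s, by simp [hsF, hc]⟩)
    have hle : ((d : ℝ) : EReal) ≤ ((w s : ℝ) : EReal) * l s := not_lt.mp hcond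
    obtain ⟨hpi, hlbot⟩ := pI_eq_l Fstar l u w d s hsF (hw s) hd (hl s) (hlu s) hle
    have hps : (l s).toReal ≤ p s := by
      have := (hbnd s).1
      rw [← EReal.coe_toReal (hl s) hlbot] at this
      exact_mod_cast this
    rw [hpi]; linarith
  have e1 : ∑ s ∈ Fstar \ Fd, (c s - pI Fstar l u w d s)
      - ∑ s ∈ Fd \ Fstar, (c s - pI Fstar l u w d s)
      = costd Fstar c l u w d Fstar - costd Fstar c l u w d Fd :=
    Finset.sum_sdiff_sub_sum_sdiff ..
  have e2 : ∑ s ∈ Fstar \ Fd, (c s - p s) - ∑ s ∈ Fd \ Fstar, (c s - p s)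
      = ∑ s ∈ Fstar, (c s - p s) - ∑ s ∈ Fd, (c s - p s) :=
    Finset.sum_sdiff_sub_sum_sdiff ..
  have i1 : ∑ s ∈ Fstar \ Fd, (c s - pI Fstar l u w d s) ≤ ∑ s ∈ Fstar \ Fd, (c s - p s) :=
    Finset.sum_le_sum key1
  have i2 : ∑ s ∈ Fd \ Fstar, (c s - p s) ≤ ∑ s ∈ Fd \ Fstar, (c s - pI Fstar l u w d s) :=
    Finset.sum_le_sum key2
  linarith
end
end
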